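/- arXiv:2509.14225 — 3 statements merged into one kernel-verified Lean document; each statement's English description precedes it below -/
import Mathlib

section
/- Let α > 1, let Σ be a symmetric positive definite m×m real matrix, and let μ, v ∈ ℝ^m. Then the Rényi divergence of order α between the Gaussian measures N(μ, Σ) and N(μ + v, Σ) equals (α/2)·vᵀΣ⁻¹v. -/
open MeasureTheory Matrix

/-- The density of the multivariate Gaussian distribution `N(μ, S)` on `ℝ^m`
(with respect to Lebesgue measure), for a covariance matrix `S`. -/
noncomputable def gaussianPdf {m : ℕ} (μ : Fin m → ℝ) (S : Matrix (Fin m) (Fin m) ℝ)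
    (x : Fin m → ℝ) : ℝ :=
  (Real.sqrt ((2 * Real.pi) ^ m * S.det))⁻¹ *
    Real.exp (-(1 / 2) * ((x - μ) ⬝ᵥ (S⁻¹ *ᵥ (x - μ))))

/-- The multivariate Gaussian measure `N(μ, S)` on `ℝ^m`. -/
noncomputable def gaussianMeasure {m : ℕ} (μ : Fin m → ℝ) (S : Matrix (Fin m) (Fin m) ℝ) :
    Measure (Fin m → ℝ) :=
  volume.withDensity fun x => ENNReal.ofReal (gaussianPdf μ S x)

/-- The Rényi divergence of order `α` between measures `P` and `Q`:
`D_α(P‖Q) = (α−1)⁻¹ log ∫ (dP/dQ)^α dQ`. -/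
noncomputable def renyiDiv {X : Type*} [MeasurableSpace X] (α : ℝ) (P Q : Measure X) : ℝ :=
  (α - 1)⁻¹ * Real.log (∫ x, (P.rnDeriv Q x).toReal ^ α ∂Q)

/-!
Both measures have explicit Lebesgue densities `p` and `q`, so `∫ (dP/dQ)^α dQ = ∫ q (p/q)^α`.
Completing the square in the exponent, `q (p/q)^α` is `exp (α(α-1)/2 · vᵀS⁻¹v)` times the density
of `N(μ + (1-α)v, S)`, which integrates to `1`; taking `(α-1)⁻¹ log` leaves `α/2 · vᵀS⁻¹v`.
The normalising constant `∫ exp (-xᵀS⁻¹x/2) dx = √((2π)^m det S)` comes from writing `S = BᵀB`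
and substituting `x = Bᵀz`, which reduces it to a product of one-dimensional Gaussian integrals.
-/

section GaussianIntegral

variable {ι : Type*} [Fintype ι]

theorem integral_comp_mulVec [DecidableEq ι] {E : Type*} [NormedAddCommGroup E]
    [NormedSpace ℝ E] {A : Matrix ι ι ℝ} (hA : A.det ≠ 0) (f : (ι → ℝ) → E) :
    ∫ z, f (A *ᵥ z) = |A.det|⁻¹ • ∫ x, f x := by
  have : Invertible A := A.invertibleOfIsUnitDet hA.isUnit
  have hemb : MeasurableEmbedding (toLin' A) :=
    (A.toLinearEquiv' this).toContinuousLinearEquiv.toHomeomorph.measurableEmbedding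
  rw [← abs_inv, ← ENNReal.toReal_ofReal (abs_nonneg A.det⁻¹), ← integral_smul_measure,
    ← Real.map_matrix_volume_pi_eq_smul_volume_pi hA, hemb.integral_map]
  rfl

theorem integral_exp_neg_half_dotProduct_self :
    ∫ z : ι → ℝ, Real.exp (-(1 / 2) * (z ⬝ᵥ z)) = Real.sqrt (2 * Real.pi) ^ Fintype.card ι := by
  have hprod (z : ι → ℝ) :
      Real.exp (-(1 / 2) * (z ⬝ᵥ z)) = ∏ i, Real.exp (-(1 / 2) * z i ^ 2) := by
    simp [← Real.exp_sum, dotProduct, Finset.mul_sum, sq]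
  simp_rw [hprod]
  rw [integral_fintype_prod_volume_eq_pow (fun t : ℝ => Real.exp (-(1 / 2) * t ^ 2)),
    integral_gaussian]
  norm_num [div_div_eq_mul_div, mul_comm]

theorem Matrix.PosDef.integral_exp_neg_half_dotProduct_inv_mulVec [DecidableEq ι]
    {S : Matrix ι ι ℝ} (hS : S.PosDef) :
    ∫ x : ι → ℝ, Real.exp (-(1 / 2) * (x ⬝ᵥ S⁻¹ *ᵥ x)) =
      Real.sqrt ((2 * Real.pi) ^ Fintype.card ι * S.det) := by
  open scoped MatrixOrder in
  obtain ⟨B, hB, rfl⟩ := CStarAlgebra.isStrictlyPositive_iff_eq_star_mul_self.mp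
    hS.isStrictlyPositive
  rw [star_eq_conjTranspose, conjTranspose_eq_transpose_of_trivial]
  have hdet : B.det ≠ 0 := ((isUnit_iff_isUnit_det B).1 hB).ne_zero
  have : Invertible B := B.invertibleOfIsUnitDet hdet.isUnit
  have hquad (z : ι → ℝ) : (Bᵀ *ᵥ z) ⬝ᵥ (Bᵀ * B)⁻¹ *ᵥ (Bᵀ *ᵥ z) = z ⬝ᵥ z := by
    rw [mulVec_mulVec, mulVec_transpose, ← dotProduct_mulVec, mulVec_mulVec, Matrix.mul_inv_rev]
    rw [inv_mul_cancel_right_of_invertible, mul_inv_of_invertible, one_mulVec]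
  have hchange := integral_comp_mulVec (A := Bᵀ) (by rwa [det_transpose])
    (fun x => Real.exp (-(1 / 2) * (x ⬝ᵥ (Bᵀ * B)⁻¹ *ᵥ x)))
  simp only [hquad, integral_exp_neg_half_dotProduct_self, det_transpose, smul_eq_mul] at hchange
  rw [eq_inv_mul_iff_mul_eq₀ (abs_ne_zero.2 hdet)] at hchange
  rw [← hchange, det_mul, det_transpose, ← sq, Real.sqrt_mul' _ (sq_nonneg _),
    Real.sqrt_sq_eq_abs, mul_comm]
  congr 1
  rw [eq_comm, Real.sqrt_eq_iff_mul_self_eq_of_pos (by positivity), ← mul_pow,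
    Real.mul_self_sqrt (by positivity)]

end GaussianIntegral

theorem Matrix.IsSymm.dotProduct_mulVec_convex_comb {ι R : Type*} [Fintype ι] [CommRing R]
    {A : Matrix ι ι R} (hA : A.IsSymm) (t : R) (y v : ι → R) :
    t * (y ⬝ᵥ A *ᵥ y) + (1 - t) * ((y - v) ⬝ᵥ A *ᵥ (y - v)) =
      (y - (1 - t) • v) ⬝ᵥ A *ᵥ (y - (1 - t) • v) + t * (1 - t) * (v ⬝ᵥ A *ᵥ v) := by
  have hsymm : v ⬝ᵥ A *ᵥ y = y ⬝ᵥ A *ᵥ v := by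
    rw [dotProduct_mulVec, ← mulVec_transpose, hA.eq, dotProduct_comm]
  simp only [sub_dotProduct, dotProduct_sub, mulVec_sub, mulVec_smul, smul_dotProduct,
    dotProduct_smul, smul_eq_mul, hsymm]
  ring

theorem renyiDiv_withDensity_ofReal {X : Type*} [MeasurableSpace X] (ν : Measure X)
    [SigmaFinite ν] {p q : X → ℝ} (hp : Measurable p) (hq : Measurable q) (hp_nonneg : ∀ x, 0 ≤ p x)
    (hq_pos : ∀ x, 0 < q x) (α : ℝ) :
    renyiDiv α (ν.withDensity fun x => ENNReal.ofReal (p x))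
        (ν.withDensity fun x => ENNReal.ofReal (q x)) =
      (α - 1)⁻¹ * Real.log (∫ x, q x * (p x / q x) ^ α ∂ν) := by
  set Q := ν.withDensity fun x => ENNReal.ofReal (q x)
  have hratio : Measurable fun x => ENNReal.ofReal (p x / q x) := (hp.div hq).ennreal_ofReal
  have hPQ : ν.withDensity (fun x => ENNReal.ofReal (p x)) =
      Q.withDensity fun x => ENNReal.ofReal (p x / q x) := by
    rw [← withDensity_mul _ hq.ennreal_ofReal hratio]
    congr with x
    rw [Pi.mul_apply, ← ENNReal.ofReal_mul (hq_pos x).le, mul_div_cancel₀ _ (hq_pos x).ne']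
  have hrn := Measure.rnDeriv_withDensity Q hratio
  rw [renyiDiv, hPQ, integral_congr_ae (hrn.mono fun x hx => by rw [hx]),
    integral_withDensity_eq_integral_toReal_smul hq.ennreal_ofReal
      (ae_of_all _ fun _ => ENNReal.ofReal_lt_top)]
  congr 3 with x
  rw [ENNReal.toReal_ofReal (hq_pos x).le,
    ENNReal.toReal_ofReal (div_nonneg (hp_nonneg x) (hq_pos x).le), smul_eq_mul]

section Gaussian

variable {m : ℕ}

theorem gaussianPdf_nonneg (μ : Fin m → ℝ) (S : Matrix (Fin m) (Fin m) ℝ) (x : Fin m → ℝ) :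
    0 ≤ gaussianPdf μ S x := by
  unfold gaussianPdf; positivity

theorem gaussianPdf_pos {S : Matrix (Fin m) (Fin m) ℝ} (hS : S.PosDef) (μ x : Fin m → ℝ) :
    0 < gaussianPdf μ S x := by
  have := hS.det_pos
  unfold gaussianPdf; positivity

theorem continuous_gaussianPdf (μ : Fin m → ℝ) (S : Matrix (Fin m) (Fin m) ℝ) :
    Continuous (gaussianPdf μ S) := by
  unfold gaussianPdf; fun_prop

theorem integral_gaussianPdf {S : Matrix (Fin m) (Fin m) ℝ} (hS : S.PosDef) (μ : Fin m → ℝ) :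
    ∫ x, gaussianPdf μ S x = 1 := by
  have hint := integral_sub_right_eq_self (μ := volume)
    (fun y : Fin m → ℝ => Real.exp (-(1 / 2) * (y ⬝ᵥ S⁻¹ *ᵥ y))) μ
  rw [hS.integral_exp_neg_half_dotProduct_inv_mulVec, Fintype.card_fin] at hint
  have hdet := hS.det_pos
  unfold gaussianPdf
  rw [integral_const_mul, hint, inv_mul_cancel₀ (by positivity)]

theorem gaussianPdf_mul_div_rpow {S : Matrix (Fin m) (Fin m) ℝ} (hS : S.IsSymm) (α : ℝ)
    (μ v x : Fin m → ℝ) :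
    gaussianPdf (μ + v) S x * (gaussianPdf μ S x / gaussianPdf (μ + v) S x) ^ α =
      Real.exp (α * (α - 1) / 2 * (v ⬝ᵥ S⁻¹ *ᵥ v)) * gaussianPdf (μ + (1 - α) • v) S x := by
  unfold gaussianPdf
  set c := (Real.sqrt ((2 * Real.pi) ^ m * S.det))⁻¹
  -- `c = 0` is the junk case `det S ≤ 0`
  rcases eq_or_ne c 0 with hc | hc
  · simp [hc]
  rw [mul_div_mul_left _ _ hc, ← Real.exp_sub, ← Real.exp_mul, mul_assoc, ← Real.exp_add,
    mul_left_comm, ← Real.exp_add]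
  congr 2
  have h := hS.inv.dotProduct_mulVec_convex_comb α (x - μ) v
  rw [sub_add_eq_sub_sub, sub_add_eq_sub_sub]
  linear_combination (-1 / 2) * h

end Gaussian

/-- The Rényi divergence of order `α > 1` between the Gaussian measures `N(μ, S)` and
`N(μ + v, S)`, for a symmetric positive definite covariance `S`, equals `(α/2)·vᵀ S⁻¹ v`. -/
theorem renyiDiv_gaussian_gaussian_shift {m : ℕ} (α : ℝ) (hα : 1 < α)
    (S : Matrix (Fin m) (Fin m) ℝ) (hS : S.PosDef) (μ v : Fin m → ℝ) :
    renyiDiv α (gaussianMeasure μ S) (gaussianMeasure (μ + v) S) =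
      α / 2 * (v ⬝ᵥ (S⁻¹ *ᵥ v)) := by
  have hSymm : S.IsSymm := (conjTranspose_eq_transpose_of_trivial S).symm.trans hS.1
  rw [gaussianMeasure, gaussianMeasure,
    renyiDiv_withDensity_ofReal volume (continuous_gaussianPdf μ S).measurable
      (continuous_gaussianPdf (μ + v) S).measurable (gaussianPdf_nonneg μ S)
      (gaussianPdf_pos hS _) α]
  simp_rw [gaussianPdf_mul_div_rpow hSymm]
  rw [integral_const_mul, integral_gaussianPdf hS, mul_one, Real.log_exp]
  field_simp [sub_ne_zero.2 hα.ne']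
end

section
/- Let F be an m×m real matrix with F + Fᵀ negative semidefinite, L > 0, and Σ₀ a symmetric positive definite m×m matrix. Then for every t ≥ 0 the matrix Σ_t = L⁻¹I + exp(Ft)(Σ₀ − L⁻¹I)exp(Ft)ᵀ is symmetric positive definite. -/
/-!
With `E = exp(tF)`, write `Σ_t = L⁻¹(I - E Eᵀ) + E Σ₀ Eᵀ`. The second summand is positive
definite because `E` is invertible. The first is positive semidefinite because `E` is a
contraction: `d/ds (exp(sF) exp(sF)ᵀ) = exp(sF) (F + Fᵀ) exp(sF)ᵀ ≤ 0`, so every quadratic form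
of `exp(sF) exp(sF)ᵀ` decreases in `s` from its value for `I` at `s = 0`.
-/

open Matrix

namespace Matrix

variable {m n : Type*} [Fintype m] [Fintype n]

theorem dotProduct_mul_mul_transpose_mulVec_nonpos {A : Matrix n n ℝ} (hA : (-A).PosSemidef)
    (B : Matrix m n ℝ) (x : m → ℝ) : x ⬝ᵥ ((B * A * Bᵀ) *ᵥ x) ≤ 0 := by
  have := (hA.mul_mul_conjTranspose_same B).dotProduct_mulVec_nonneg x
  simpa [conjTranspose_eq_transpose_of_trivial, neg_mulVec] using this

variable [DecidableEq n]

section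
attribute [local instance] Matrix.linftyOpNormedRing Matrix.linftyOpNormedAlgebra

theorem hasDerivAt_exp_smul_mul_transpose (F : Matrix n n ℝ) (u : ℝ) :
    HasDerivAt (fun s : ℝ => NormedSpace.exp (s • F) * (NormedSpace.exp (s • F))ᵀ)
      (NormedSpace.exp (u • F) * (F + Fᵀ) * (NormedSpace.exp (u • F))ᵀ) u := by
  simp_rw [← exp_transpose, transpose_smul]
  refine ((hasDerivAt_exp_smul_const F u).mul (hasDerivAt_exp_smul_const' Fᵀ u)).congr_deriv ?_
  noncomm_ring

theorem hasDerivAt_dotProduct_mulVec {M : ℝ → Matrix n n ℝ} {M' : Matrix n n ℝ} {u : ℝ}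
    (hM : HasDerivAt M M' u) (x y : n → ℝ) :
    HasDerivAt (fun s => x ⬝ᵥ (M s *ᵥ y)) (x ⬝ᵥ (M' *ᵥ y)) u := by
  have := (LinearMap.toContinuousLinearMap (LinearMap.applyₗ y ∘ₗ LinearMap.applyₗ x ∘ₗ
    (toLinearMap₂' ℝ).toLinearMap)).hasFDerivAt.comp_hasDerivAt u hM
  simpa [Function.comp_def, toLinearMap₂'_apply'] using this

end

theorem antitone_dotProduct_exp_smul_mul_transpose_mulVec {F : Matrix n n ℝ}
    (hF : (-(F + Fᵀ)).PosSemidef) (x : n → ℝ) :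
    Antitone fun t : ℝ =>
      x ⬝ᵥ ((NormedSpace.exp (t • F) * (NormedSpace.exp (t • F))ᵀ) *ᵥ x) := by
  have hderiv u := hasDerivAt_dotProduct_mulVec (hasDerivAt_exp_smul_mul_transpose F u) x x
  refine antitone_of_deriv_nonpos (fun u => (hderiv u).differentiableAt) fun u => ?_
  rw [(hderiv u).deriv]
  exact dotProduct_mul_mul_transpose_mulVec_nonpos hF _ x

theorem posSemidef_one_sub_exp_smul_mul_transpose {F : Matrix n n ℝ}
    (hF : (-(F + Fᵀ)).PosSemidef) {t : ℝ} (ht : 0 ≤ t) :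
    (1 - NormedSpace.exp (t • F) * (NormedSpace.exp (t • F))ᵀ).PosSemidef := by
  refine .of_dotProduct_mulVec_nonneg ?_ fun x => ?_
  · simp [IsHermitian, conjTranspose_eq_transpose_of_trivial, transpose_sub]
  · simpa [sub_mulVec] using antitone_dotProduct_exp_smul_mul_transpose_mulVec hF x ht

end Matrix

/-- If `F + Fᵀ` is negative semidefinite, `L > 0`, and `Σ₀` is symmetric positive definite,
then `Σ_t = L⁻¹I + exp(Ft)(Σ₀ − L⁻¹I)exp(Ft)ᵀ` is symmetric positive definite for all `t ≥ 0`. -/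
theorem sigmaT_posDef {m : ℕ} (F : Matrix (Fin m) (Fin m) ℝ)
    (hF : (-(F + Fᵀ)).PosSemidef) (L : ℝ) (hL : 0 < L)
    (S0 : Matrix (Fin m) (Fin m) ℝ) (hS0 : S0.PosDef) :
    ∀ t : ℝ, 0 ≤ t →
      (L⁻¹ • (1 : Matrix (Fin m) (Fin m) ℝ) +
        NormedSpace.exp (t • F) * (S0 - L⁻¹ • 1) * (NormedSpace.exp (t • F))ᵀ).PosDef := by
  intro t ht
  set E := NormedSpace.exp (t • F)
  have hsplit : L⁻¹ • 1 + E * (S0 - L⁻¹ • 1) * Eᵀ = L⁻¹ • (1 - E * Eᵀ) + E * S0 * Eᵀ := by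
    simp only [mul_sub, sub_mul, mul_smul_comm, smul_mul_assoc, mul_one, smul_sub]
    abel
  have hE : Function.Injective E.vecMul := vecMul_injective_iff_isUnit.2 (isUnit_exp _)
  have hES0 : (E * S0 * Eᵀ).PosDef := by
    simpa [conjTranspose_eq_transpose_of_trivial] using hS0.mul_mul_conjTranspose_same hE
  rw [hsplit]
  exact PosDef.posSemidef_add
    ((posSemidef_one_sub_exp_smul_mul_transpose hF ht).smul (inv_nonneg.2 hL.le)) hES0
end

section
/- (Lemma 2.) Let F be an m×m real matrix with F + Fᵀ negative semidefinite, L > 0, and Σ₀ a symmetric positive definite m×m matrix, and for t ≥ 0 let Σ_t = L⁻¹I + exp(Ft)(Σ₀ − L⁻¹I)exp(Ft)ᵀ. Then for every finite set D ⊆ ℝ^m, the sensitivity Δf_t = max_{y,z ∈ D} (y − z)ᵀ exp(Ft)ᵀ Σ_t⁻¹ exp(Ft) (y − z) is a nonincreasing function of t on [0, ∞); in particular Δf_t ≤ Δf_0 = max_{y,z ∈ D} (y − z)ᵀ Σ₀⁻¹ (y − z) for all t ≥ 0. -/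
open Matrix

/-- `Σ_t = L⁻¹I + exp(Ft)(Σ₀ − L⁻¹I)exp(Ft)ᵀ`. -/
noncomputable def sigmaT {m : ℕ} (F : Matrix (Fin m) (Fin m) ℝ) (L : ℝ)
    (S0 : Matrix (Fin m) (Fin m) ℝ) (t : ℝ) : Matrix (Fin m) (Fin m) ℝ :=
  L⁻¹ • 1 + NormedSpace.exp (t • F) * (S0 - L⁻¹ • 1) * (NormedSpace.exp (t • F))ᵀ

/-- The sensitivity `Δf_t = max_{y,z ∈ D} (y − z)ᵀ exp(Ft)ᵀ Σ_t⁻¹ exp(Ft) (y − z)` for a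
nonempty finite set `D ⊆ ℝ^m`. -/
noncomputable def sensitivity {m : ℕ} (F : Matrix (Fin m) (Fin m) ℝ) (L : ℝ)
    (S0 : Matrix (Fin m) (Fin m) ℝ) (D : Finset (Fin m → ℝ)) (hD : D.Nonempty) (t : ℝ) : ℝ :=
  (D ×ˢ D).sup' (hD.product hD) fun p =>
    (p.1 - p.2) ⬝ᵥ
      (((NormedSpace.exp (t • F))ᵀ * (sigmaT F L S0 t)⁻¹ * NormedSpace.exp (t • F)) *ᵥ
        (p.1 - p.2))

/-
Write `E = exp(Ft)`. Since `E` is invertible, `Eᵀ Σ_t⁻¹ E = N_t⁻¹` with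
`N_t = E⁻¹ Σ_t E⁻ᵀ = Σ₀ + L⁻¹ (exp(−Ft) exp(−Ft)ᵀ − I)`. The derivative of `exp(−Ft) exp(−Ft)ᵀ` is
`exp(−Ft) (−(F + Fᵀ)) exp(−Ft)ᵀ ⪰ 0`, so `N_t` increases in the Loewner order from `N_0 = Σ₀ ≻ 0`.
Matrix inversion reverses the Loewner order on positive definite matrices, so every quadratic form
of `N_t⁻¹`, and hence their maximum over `D`, is nonincreasing in `t`.
-/

open scoped MatrixOrder

namespace Matrix

variable {n : Type*} {A B : Matrix n n ℝ}

lemma PosDef.of_le (hA : A.PosDef) (hAB : A ≤ B) : B.PosDef := by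
  simpa using hA.add_posSemidef (le_iff.mp hAB)

variable [Fintype n]

lemma dotProduct_mulVec_le_of_le (hAB : A ≤ B) (x : n → ℝ) :
    x ⬝ᵥ (A *ᵥ x) ≤ x ⬝ᵥ (B *ᵥ x) := by
  have := (le_iff.mp hAB).dotProduct_mulVec_nonneg x
  rwa [star_trivial, sub_mulVec, dotProduct_sub, sub_nonneg] at this

lemma le_of_dotProduct_mulVec_le (hA : A.IsHermitian) (hB : B.IsHermitian)
    (h : ∀ x, x ⬝ᵥ (A *ᵥ x) ≤ x ⬝ᵥ (B *ᵥ x)) : A ≤ B :=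
  PosSemidef.of_dotProduct_mulVec_nonneg (hB.sub hA) fun x => by
    rw [star_trivial, sub_mulVec, dotProduct_sub, sub_nonneg]
    exact h x

variable [DecidableEq n]

lemma PosDef.two_mul_dotProduct_sub_le (hA : A.PosDef) (x y : n → ℝ) :
    2 * (x ⬝ᵥ y) - y ⬝ᵥ (A *ᵥ y) ≤ x ⬝ᵥ (A⁻¹ *ᵥ x) := by
  have hAAinv : A *ᵥ (A⁻¹ *ᵥ x) = x := by
    rw [mulVec_mulVec, mul_nonsing_inv A hA.det_pos.ne'.isUnit, one_mulVec]
  have hAT : Aᵀ = A := (conjTranspose_eq_transpose_of_trivial A).symm.trans hA.1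
  have hcross : (A⁻¹ *ᵥ x) ⬝ᵥ (A *ᵥ y) = x ⬝ᵥ y := by
    rw [dotProduct_mulVec, ← mulVec_transpose, hAT, hAAinv]
  -- expand `0 ≤ (y - A⁻¹x)ᵀ A (y - A⁻¹x)`
  have hsq := hA.posSemidef.dotProduct_mulVec_nonneg (y - A⁻¹ *ᵥ x)
  rw [star_trivial, mulVec_sub, hAAinv, sub_dotProduct, dotProduct_sub, dotProduct_sub,
    hcross, dotProduct_comm y x, dotProduct_comm (A⁻¹ *ᵥ x) x] at hsq
  linarith

lemma PosDef.inv_le_inv (hA : A.PosDef) (hAB : A ≤ B) : B⁻¹ ≤ A⁻¹ := by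
  have hB := hA.of_le hAB
  refine le_of_dotProduct_mulVec_le hB.inv.1 hA.inv.1 fun x => ?_
  set y := B⁻¹ *ᵥ x
  have hBy : B *ᵥ y = x := by
    rw [mulVec_mulVec, mul_nonsing_inv B hB.det_pos.ne'.isUnit, one_mulVec]
  calc x ⬝ᵥ (B⁻¹ *ᵥ x) = 2 * (x ⬝ᵥ y) - y ⬝ᵥ (B *ᵥ y) := by
        rw [hBy, dotProduct_comm y]; ring
    _ ≤ 2 * (x ⬝ᵥ y) - y ⬝ᵥ (A *ᵥ y) := by linarith [dotProduct_mulVec_le_of_le hAB y]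
    _ ≤ x ⬝ᵥ (A⁻¹ *ᵥ x) := hA.two_mul_dotProduct_sub_le x y

end Matrix

section
variable {n : Type*} [Fintype n] [DecidableEq n]

lemma hasDerivAt_dotProduct_exp_smul_mul_transpose_mulVec (B : Matrix n n ℝ) (x : n → ℝ)
    (t : ℝ) :
    HasDerivAt (fun s : ℝ => x ⬝ᵥ ((NormedSpace.exp (s • B) * (NormedSpace.exp (s • B))ᵀ) *ᵥ x))
      (x ⬝ᵥ ((NormedSpace.exp (t • B) * (B + Bᵀ) * (NormedSpace.exp (t • B))ᵀ) *ᵥ x)) t := by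
  -- any algebra norm on matrices will do: the statement only involves their topology
  let _ : NormedRing (Matrix n n ℝ) := Matrix.linftyOpNormedRing
  let _ : NormedAlgebra ℝ (Matrix n n ℝ) := Matrix.linftyOpNormedAlgebra
  have hE : HasDerivAt (fun s : ℝ => NormedSpace.exp (s • B)) (NormedSpace.exp (t • B) * B) t :=
    hasDerivAt_exp_smul_const B t
  have hET : HasDerivAt (fun s : ℝ => (NormedSpace.exp (s • B))ᵀ)
      (NormedSpace.exp (t • B) * B)ᵀ t :=
    (transposeLinearEquiv n n ℝ ℝ).toLinearMap.toContinuousLinearMap.hasFDerivAt.comp_hasDerivAt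
      t hE
  let q : Matrix n n ℝ →L[ℝ] ℝ := LinearMap.toContinuousLinearMap
    { toFun := fun M => x ⬝ᵥ (M *ᵥ x)
      map_add' := fun M N => by simp [add_mulVec]
      map_smul' := fun c M => by simp [smul_mulVec] }
  refine (q.hasFDerivAt.comp_hasDerivAt t (hE.mul hET)).congr_deriv ?_
  show x ⬝ᵥ (_ *ᵥ x) = _
  rw [transpose_mul]
  noncomm_ring

lemma monotone_exp_smul_mul_transpose {B : Matrix n n ℝ} (hB : (B + Bᵀ).PosSemidef) :
    Monotone fun t : ℝ => NormedSpace.exp (t • B) * (NormedSpace.exp (t • B))ᵀ := by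
  intro s t hst
  have hsymm (E : Matrix n n ℝ) : (E * Eᵀ).IsHermitian := by
    simpa [conjTranspose_eq_transpose_of_trivial] using isHermitian_mul_conjTranspose_self E
  refine Matrix.le_of_dotProduct_mulVec_le (hsymm _) (hsymm _) fun x => ?_
  have hderiv := hasDerivAt_dotProduct_exp_smul_mul_transpose_mulVec B x
  refine monotone_of_deriv_nonneg (fun t => (hderiv t).differentiableAt) (fun t => ?_) hst
  rw [(hderiv t).deriv]
  simpa [conjTranspose_eq_transpose_of_trivial] using
    (hB.mul_mul_conjTranspose_same (NormedSpace.exp (t • B))).dotProduct_mulVec_nonneg x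

end

/-- `N_t = exp(−Ft) Σ_t exp(−Ft)ᵀ`, written so that its monotonicity in `t` is visible. -/
noncomputable def pulledBackSigmaT {m : ℕ} (F : Matrix (Fin m) (Fin m) ℝ) (L : ℝ)
    (S0 : Matrix (Fin m) (Fin m) ℝ) (t : ℝ) : Matrix (Fin m) (Fin m) ℝ :=
  S0 + L⁻¹ • (NormedSpace.exp (t • -F) * (NormedSpace.exp (t • -F))ᵀ - 1)

section
variable {m : ℕ} (F : Matrix (Fin m) (Fin m) ℝ) (L : ℝ) (S0 : Matrix (Fin m) (Fin m) ℝ) (t : ℝ)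

lemma sigmaT_eq_exp_mul_pulledBackSigmaT_mul_transpose :
    sigmaT F L S0 t =
      NormedSpace.exp (t • F) * pulledBackSigmaT F L S0 t * (NormedSpace.exp (t • F))ᵀ := by
  rw [sigmaT, pulledBackSigmaT, smul_neg, Matrix.exp_neg]
  set E := NormedSpace.exp (t • F)
  have hE : IsUnit E.det := (isUnit_iff_isUnit_det E).mp (Matrix.isUnit_exp _)
  have hgram : E * (E⁻¹ * E⁻¹ᵀ) * Eᵀ = 1 := by
    rw [mul_nonsing_inv_cancel_left _ _ hE, ← transpose_mul, mul_nonsing_inv _ hE, transpose_one]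
  simp only [mul_add, add_mul, mul_sub, sub_mul, mul_smul_comm, smul_mul_assoc, mul_one, hgram,
    smul_sub]
  abel

lemma transpose_exp_mul_inv_sigmaT_mul_exp :
    (NormedSpace.exp (t • F))ᵀ * (sigmaT F L S0 t)⁻¹ * NormedSpace.exp (t • F) =
      (pulledBackSigmaT F L S0 t)⁻¹ := by
  have hE : IsUnit (NormedSpace.exp (t • F)).det :=
    (isUnit_iff_isUnit_det _).mp (Matrix.isUnit_exp _)
  have hET : IsUnit (NormedSpace.exp (t • F))ᵀ.det := by rwa [det_transpose]
  rw [sigmaT_eq_exp_mul_pulledBackSigmaT_mul_transpose, Matrix.mul_inv_rev, Matrix.mul_inv_rev,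
    mul_nonsing_inv_cancel_left _ _ hET, nonsing_inv_mul_cancel_right _ _ hE]

lemma pulledBackSigmaT_zero : pulledBackSigmaT F L S0 0 = S0 := by
  simp [pulledBackSigmaT]

end

section
variable {m : ℕ} {F : Matrix (Fin m) (Fin m) ℝ} {L : ℝ} {S0 : Matrix (Fin m) (Fin m) ℝ}

lemma monotone_pulledBackSigmaT (hF : (-(F + Fᵀ)).PosSemidef) (hL : 0 ≤ L) :
    Monotone (pulledBackSigmaT F L S0) := by
  have hnegF : (-F + (-F)ᵀ).PosSemidef := by rwa [transpose_neg, ← neg_add]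
  intro s t hst
  rw [le_iff, pulledBackSigmaT, pulledBackSigmaT, add_sub_add_left_eq_sub, ← smul_sub,
    sub_sub_sub_cancel_right]
  exact (le_iff.mp (monotone_exp_smul_mul_transpose hnegF hst)).smul (inv_nonneg.2 hL)

lemma antitoneOn_inv_pulledBackSigmaT (hF : (-(F + Fᵀ)).PosSemidef) (hL : 0 ≤ L)
    (hS0 : S0.PosDef) : AntitoneOn (fun t => (pulledBackSigmaT F L S0 t)⁻¹) (Set.Ici 0) := by
  intro s hs t _ hst
  have hmono := monotone_pulledBackSigmaT (S0 := S0) hF hL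
  have hS0_le : S0 ≤ pulledBackSigmaT F L S0 s := by
    simpa only [pulledBackSigmaT_zero] using hmono hs
  exact (hS0.of_le hS0_le).inv_le_inv (hmono hst)

lemma sensitivity_eq_sup'_pulledBackSigmaT (D : Finset (Fin m → ℝ)) (hD : D.Nonempty) (t : ℝ) :
    sensitivity F L S0 D hD t = (D ×ˢ D).sup' (hD.product hD) fun p =>
      (p.1 - p.2) ⬝ᵥ ((pulledBackSigmaT F L S0 t)⁻¹ *ᵥ (p.1 - p.2)) := by
  simp only [sensitivity, transpose_exp_mul_inv_sigmaT_mul_exp]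

end

/-- Lemma 2: if `F + Fᵀ` is negative semidefinite, `L > 0` and `Σ₀` is symmetric positive
definite, then the sensitivity `Δf_t` is nonincreasing in `t` on `[0, ∞)`; in particular
`Δf_t ≤ Δf_0 = max_{y,z ∈ D} (y − z)ᵀ Σ₀⁻¹ (y − z)` for all `t ≥ 0`. -/
theorem sensitivity_antitoneOn {m : ℕ} (F : Matrix (Fin m) (Fin m) ℝ)
    (hF : (-(F + Fᵀ)).PosSemidef) (L : ℝ) (hL : 0 < L)
    (S0 : Matrix (Fin m) (Fin m) ℝ) (hS0 : S0.PosDef)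
    (D : Finset (Fin m → ℝ)) (hD : D.Nonempty) :
    AntitoneOn (sensitivity F L S0 D hD) (Set.Ici 0) ∧
    (∀ t : ℝ, 0 ≤ t → sensitivity F L S0 D hD t ≤ sensitivity F L S0 D hD 0) ∧
    sensitivity F L S0 D hD 0 =
      (D ×ˢ D).sup' (hD.product hD) fun p => (p.1 - p.2) ⬝ᵥ (S0⁻¹ *ᵥ (p.1 - p.2)) := by
  have hanti : AntitoneOn (sensitivity F L S0 D hD) (Set.Ici 0) := fun s hs t ht hst => by
    simp only [sensitivity_eq_sup'_pulledBackSigmaT]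
    exact Finset.sup'_mono_fun fun p _ => Matrix.dotProduct_mulVec_le_of_le
      (antitoneOn_inv_pulledBackSigmaT hF hL.le hS0 hs ht hst) _
  refine ⟨hanti, fun t ht => hanti Set.self_mem_Ici ht ht, ?_⟩
  rw [sensitivity_eq_sup'_pulledBackSigmaT, pulledBackSigmaT_zero]
end
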